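/- arXiv:1506.02514 — 5 statements merged into one kernel-verified Lean document; each statement's English description precedes it below -/
import Mathlib

section
/- For every nonzero j = (j₁, j₂) ∈ ℤ², every C > 0, every ν > 0 and every N > 0, the 2-dimensional Lebesgue measure of the set {a ∈ [-N, N]² : |j₁ a₁ + j₂ a₂| < C / ‖j‖^(2+ν)} is at most 4√2 · C · N / ‖j‖^(3+ν). -/
open MeasureTheory

lemma strip_meas (b c r N : ℝ) :
    MeasurableSet {a : ℝ × ℝ | a.1 ∈ Set.Icc (-N) N ∧ a.2 ∈ Set.Icc (-N) N ∧
        |c * a.1 + b * a.2| < r} := by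
  apply MeasurableSet.inter (measurableSet_Icc.preimage measurable_fst)
  apply MeasurableSet.inter (measurableSet_Icc.preimage measurable_snd)
  exact measurableSet_lt (((measurable_fst.const_mul c).add
    (measurable_snd.const_mul b)).abs) measurable_const

lemma strip_fiber_eq (b c r : ℝ) (hb : b ≠ 0) :
    {y : ℝ | |c + b * y| < r} = Metric.ball (-c / b) (r / |b|) := by
  ext y
  simp only [Set.mem_setOf_eq, Metric.mem_ball, Real.dist_eq]
  have h1 : y - -c / b = y + c / b := by ring
  have h2 : c + b * y = b * (y + c / b) := by field_simp; ring
  rw [h1, h2, abs_mul, mul_comm, ← lt_div_iff₀ (abs_pos.mpr hb)]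

lemma strip_aux (b c r N : ℝ) (hb : b ≠ 0) :
    volume {a : ℝ × ℝ | a.1 ∈ Set.Icc (-N) N ∧ a.2 ∈ Set.Icc (-N) N ∧
        |c * a.1 + b * a.2| < r}
      ≤ ENNReal.ofReal (2 * N) * ENNReal.ofReal (2 * r / |b|) := by
  set S : Set (ℝ × ℝ) := {a : ℝ × ℝ | a.1 ∈ Set.Icc (-N) N ∧ a.2 ∈ Set.Icc (-N) N ∧
        |c * a.1 + b * a.2| < r} with hSdef
  have hS : MeasurableSet S := strip_meas b c r N
  have hvol : (volume : Measure (ℝ × ℝ)) = (volume.prod volume) := rfl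
  rw [hvol, Measure.prod_apply hS]
  have hbound : ∀ x : ℝ, volume (Prod.mk x ⁻¹' S) ≤
      (Set.Icc (-N) N).indicator (fun _ => ENNReal.ofReal (2 * r / |b|)) x := by
    intro x
    by_cases hx : x ∈ Set.Icc (-N) N
    · rw [Set.indicator_of_mem hx]
      have hsub : Prod.mk x ⁻¹' S ⊆ Metric.ball (-(c * x) / b) (r / |b|) := by
        rw [← strip_fiber_eq b (c * x) r hb]
        intro y hy
        exact hy.2.2
      calc volume (Prod.mk x ⁻¹' S) ≤ volume (Metric.ball (-(c * x) / b) (r / |b|)) :=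
            measure_mono hsub
        _ = ENNReal.ofReal (2 * (r / |b|)) := by rw [Real.volume_ball]
        _ = ENNReal.ofReal (2 * r / |b|) := by rw [mul_div_assoc]
    · rw [Set.indicator_of_notMem hx]
      have : Prod.mk x ⁻¹' S = ∅ := by
        ext y; simp only [Set.mem_preimage, Set.mem_empty_iff_false, iff_false]
        intro hy; exact hx hy.1
      simp [this]
  calc ∫⁻ x, volume (Prod.mk x ⁻¹' S)
      ≤ ∫⁻ x, (Set.Icc (-N) N).indicator (fun _ => ENNReal.ofReal (2 * r / |b|)) x :=
        lintegral_mono hbound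
    _ = ENNReal.ofReal (2 * r / |b|) * volume (Set.Icc (-N) N) := by
        rw [lintegral_indicator measurableSet_Icc, setLIntegral_const]
    _ = ENNReal.ofReal (2 * N) * ENNReal.ofReal (2 * r / |b|) := by
        rw [Real.volume_Icc, show N - -N = 2 * N by ring, mul_comm]

/-- For every nonzero `j ∈ ℤ²`, `C > 0`, `ν > 0` and `N > 0`, the Lebesgue measure of
`{a ∈ [-N,N]² : |j₁ a₁ + j₂ a₂| < C / ‖j‖^(2+ν)}` is at most `4√2·C·N / ‖j‖^(3+ν)`. -/
theorem strip_measure_bound (j : ℤ × ℤ) (hj : j ≠ 0) (C ν N : ℝ)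
    (hC : 0 < C) (hν : 0 < ν) (hN : 0 < N) :
    volume {a : ℝ × ℝ | a.1 ∈ Set.Icc (-N) N ∧ a.2 ∈ Set.Icc (-N) N ∧
        |(j.1 : ℝ) * a.1 + (j.2 : ℝ) * a.2| <
          C / (Real.sqrt ((j.1 : ℝ) ^ 2 + (j.2 : ℝ) ^ 2)) ^ ((2 : ℝ) + ν)} ≤
      ENNReal.ofReal
        (4 * Real.sqrt 2 * C * N /
          (Real.sqrt ((j.1 : ℝ) ^ 2 + (j.2 : ℝ) ^ 2)) ^ ((3 : ℝ) + ν)) := by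
  set j1 : ℝ := (j.1 : ℝ) with hj1
  set j2 : ℝ := (j.2 : ℝ) with hj2
  have hsq : 0 < j1 ^ 2 + j2 ^ 2 := by
    rcases j with ⟨a, b⟩
    have : a ≠ 0 ∨ b ≠ 0 := by
      by_contra h
      push_neg at h
      exact hj (by simp [Prod.ext_iff, h.1, h.2])
    rcases this with h | h
    · have : (0:ℝ) < j1 ^ 2 := by
        have : j1 ≠ 0 := by simpa [hj1] using h
        positivity
      nlinarith [sq_nonneg j2]
    · have : (0:ℝ) < j2 ^ 2 := by
        have : j2 ≠ 0 := by simpa [hj2] using h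
        positivity
      nlinarith [sq_nonneg j1]
  set K : ℝ := Real.sqrt (j1 ^ 2 + j2 ^ 2) with hK
  have hKpos : 0 < K := Real.sqrt_pos.mpr hsq
  set P : ℝ := K ^ ((2:ℝ) + ν) with hP
  have hPpos : 0 < P := Real.rpow_pos_of_pos hKpos _
  set r : ℝ := C / P with hrdef
  have hrpos : 0 < r := by positivity
  have hKsplit : K ^ ((3:ℝ) + ν) = P * K := by
    rw [hP, show (3:ℝ) + ν = ((2:ℝ) + ν) + 1 by ring, Real.rpow_add hKpos, Real.rpow_one]
  -- key real inequality, given K ≤ √2 * m with m > 0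
  have key : ∀ m : ℝ, 0 < m → K ≤ Real.sqrt 2 * m →
      2 * N * (2 * r / m) ≤ 4 * Real.sqrt 2 * C * N / K ^ ((3:ℝ) + ν) := by
    intro m hm hKm
    rw [hKsplit, hrdef]
    have hs2 : (0:ℝ) < Real.sqrt 2 := by positivity
    have e1 : 2 * N * (2 * (C / P) / m) =
        4 * Real.sqrt 2 * C * N / (P * (Real.sqrt 2 * m)) := by
      field_simp
      ring
    rw [e1]
    gcongr
  rcases le_total |j1| |j2| with hle | hle
  · -- |j2| is larger; j2 ≠ 0
    have hb : j2 ≠ 0 := by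
      intro h
      rw [h, abs_zero] at hle
      have h1 : j1 = 0 := abs_nonpos_iff.mp hle
      rw [h1, h] at hsq; norm_num at hsq
    have hKm : K ≤ Real.sqrt 2 * |j2| := by
      rw [hK, show Real.sqrt 2 * |j2| = Real.sqrt (2 * j2 ^ 2) by
        rw [Real.sqrt_mul (by norm_num), Real.sqrt_sq_eq_abs]]
      apply Real.sqrt_le_sqrt
      nlinarith [mul_self_le_mul_self (abs_nonneg j1) hle, abs_mul_abs_self j1, abs_mul_abs_self j2]
    calc volume _ ≤ ENNReal.ofReal (2 * N) * ENNReal.ofReal (2 * r / |j2|) :=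
          strip_aux j2 j1 r N hb
      _ = ENNReal.ofReal (2 * N * (2 * r / |j2|)) := by
          rw [← ENNReal.ofReal_mul (by positivity)]
      _ ≤ ENNReal.ofReal (4 * Real.sqrt 2 * C * N / K ^ ((3:ℝ) + ν)) :=
          ENNReal.ofReal_le_ofReal (key |j2| (abs_pos.mpr hb) hKm)
  · -- |j1| is larger; j1 ≠ 0
    have hb : j1 ≠ 0 := by
      intro h
      rw [h, abs_zero] at hle
      have h1 : j2 = 0 := abs_nonpos_iff.mp hle
      rw [h1, h] at hsq; norm_num at hsq
    have hKm : K ≤ Real.sqrt 2 * |j1| := by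
      rw [hK, show Real.sqrt 2 * |j1| = Real.sqrt (2 * j1 ^ 2) by
        rw [Real.sqrt_mul (by norm_num), Real.sqrt_sq_eq_abs]]
      apply Real.sqrt_le_sqrt
      nlinarith [mul_self_le_mul_self (abs_nonneg j2) hle, abs_mul_abs_self j1, abs_mul_abs_self j2]
    have hswap : {a : ℝ × ℝ | a.1 ∈ Set.Icc (-N) N ∧ a.2 ∈ Set.Icc (-N) N ∧
          |j1 * a.1 + j2 * a.2| < r} =
        Prod.swap ⁻¹' {a : ℝ × ℝ | a.1 ∈ Set.Icc (-N) N ∧ a.2 ∈ Set.Icc (-N) N ∧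
          |j2 * a.1 + j1 * a.2| < r} := by
      ext ⟨x, y⟩
      simp only [Set.mem_preimage, Prod.swap_prod_mk, Set.mem_setOf_eq]
      rw [add_comm (j2 * y) (j1 * x)]
      tauto
    have hvol : (volume : Measure (ℝ × ℝ)) = (volume.prod volume) := rfl
    have hmp : volume (Prod.swap ⁻¹' {a : ℝ × ℝ | a.1 ∈ Set.Icc (-N) N ∧
          a.2 ∈ Set.Icc (-N) N ∧ |j2 * a.1 + j1 * a.2| < r}) =
        volume {a : ℝ × ℝ | a.1 ∈ Set.Icc (-N) N ∧ a.2 ∈ Set.Icc (-N) N ∧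
          |j2 * a.1 + j1 * a.2| < r} :=
      Measure.measurePreserving_swap.measure_preimage
        (strip_meas j1 j2 r N).nullMeasurableSet
    calc volume {a : ℝ × ℝ | a.1 ∈ Set.Icc (-N) N ∧ a.2 ∈ Set.Icc (-N) N ∧
            |j1 * a.1 + j2 * a.2| < r}
        = volume {a : ℝ × ℝ | a.1 ∈ Set.Icc (-N) N ∧ a.2 ∈ Set.Icc (-N) N ∧
            |j2 * a.1 + j1 * a.2| < r} := by rw [hswap]; exact hmp
      _ ≤ ENNReal.ofReal (2 * N) * ENNReal.ofReal (2 * r / |j1|) :=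
          strip_aux j1 j2 r N hb
      _ = ENNReal.ofReal (2 * N * (2 * r / |j1|)) := by
          rw [← ENNReal.ofReal_mul (by positivity)]
      _ ≤ ENNReal.ofReal (4 * Real.sqrt 2 * C * N / K ^ ((3:ℝ) + ν)) :=
          ENNReal.ofReal_le_ofReal (key |j1| (abs_pos.mpr hb) hKm)
end

section
/- Let 𝔸 be a complete normed ring (e.g. the Banach algebra of continuous linear endomorphisms of ℝⁿ) and let (ξᵢ)_{i∈ℕ} be a sequence of elements of 𝔸 such that Σᵢ ‖ξᵢ‖ < ∞. Then the sequence of partial products gₙ = exp(ξₙ) · exp(ξₙ₋₁) ⋯ exp(ξ₀) converges in 𝔸, and its limit g is invertible, with inverse the limit of hₙ = exp(−ξ₀) · exp(−ξ₁) ⋯ exp(−ξₙ). -/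
/-!
Since `gₙ₊₁ - gₙ = (exp ξₙ₊₁ - 1) gₙ` and `‖exp x - 1‖ ≤ e^‖x‖ - 1`, the norms grow by at most
a factor `e^‖ξₙ₊₁‖` per step, so `‖gₙ‖ ≤ e^(Σ ‖ξᵢ‖) ‖g₀‖` and the increments of `(gₙ)` are
summable; the same holds for `(hₙ)`. For each `n` the factors of `hₙ` invert those of `gₙ` in
reverse order, so `gₙ hₙ = hₙ gₙ = 1`, and this passes to the limits.
-/

open Filter Topology

lemma Real.summable_exp_sub_one {ι : Type*} {u : ι → ℝ} (hu : Summable u) :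
    Summable fun i => Real.exp (u i) - 1 := by
  refine Summable.of_norm_bounded_eventually (hu.abs.mul_left 2) ?_
  filter_upwards [hu.tendsto_cofinite_zero.eventually (eventually_abs_sub_lt 0 one_pos)]
    with i hi
  rw [sub_zero] at hi
  exact Real.abs_exp_sub_one_le hi.le

section GrowthControl

variable {E : Type*} [SeminormedAddCommGroup E] {P : ℕ → E} {u : ℕ → ℝ}

lemma norm_le_exp_tsum_mul_norm_of_norm_sub_le (hu0 : ∀ n, 0 ≤ u n) (hu : Summable u)
    (hP : ∀ n, ‖P (n + 1) - P n‖ ≤ u n * ‖P n‖) (n : ℕ) :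
    ‖P n‖ ≤ Real.exp (∑' i, u i) * ‖P 0‖ := by
  suffices ∀ n, ‖P n‖ ≤ Real.exp (∑ i ∈ Finset.range n, u i) * ‖P 0‖ from
    (this n).trans <| by gcongr; exact hu.sum_le_tsum _ fun i _ => hu0 i
  intro n
  induction n with
  | zero => simp
  | succ n ih =>
    calc ‖P (n + 1)‖ ≤ ‖P n‖ + ‖P (n + 1) - P n‖ := norm_le_insert' _ _
      _ ≤ (u n + 1) * ‖P n‖ := by linarith [hP n]
      _ ≤ Real.exp (u n) * (Real.exp (∑ i ∈ Finset.range n, u i) * ‖P 0‖) := by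
          gcongr
          exact Real.add_one_le_exp _
      _ = _ := by rw [Finset.sum_range_succ, Real.exp_add]; ring

lemma cauchySeq_of_norm_sub_le_mul_norm (hu0 : ∀ n, 0 ≤ u n) (hu : Summable u)
    (hP : ∀ n, ‖P (n + 1) - P n‖ ≤ u n * ‖P n‖) : CauchySeq P := by
  set C := Real.exp (∑' i, u i) * ‖P 0‖
  refine cauchySeq_of_dist_le_of_summable (fun n => C * u n) (fun n => ?_) (hu.mul_left C)
  calc dist (P n) (P n.succ) = ‖P (n + 1) - P n‖ := dist_comm _ _ |>.trans (dist_eq_norm _ _)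
    _ ≤ u n * ‖P n‖ := hP n
    _ ≤ C * u n := by
      rw [mul_comm]
      gcongr
      exacts [hu0 n, norm_le_exp_tsum_mul_norm_of_norm_sub_le hu0 hu hP n]

end GrowthControl

section ListProd

variable {R : Type*} [NormedRing R] {a : ℕ → R}

lemma cauchySeq_list_prod_reverse_range (ha : Summable fun i => ‖a i - 1‖) :
    CauchySeq fun n => ((List.range (n + 1)).reverse.map a).prod := by
  refine cauchySeq_of_norm_sub_le_mul_norm (u := fun n => ‖a (n + 1) - 1‖)
    (fun _ => norm_nonneg _) ((summable_nat_add_iff (f := fun i => ‖a i - 1‖) 1).2 ha)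
    fun n => ?_
  have hstep : ((List.range (n + 1 + 1)).reverse.map a).prod =
      a (n + 1) * ((List.range (n + 1)).reverse.map a).prod := by
    rw [List.range_succ (n := n + 1)]
    simp
  rw [hstep, ← sub_one_mul]
  exact norm_mul_le _ _

lemma cauchySeq_list_prod_range (ha : Summable fun i => ‖a i - 1‖) :
    CauchySeq fun n => ((List.range (n + 1)).map a).prod := by
  refine cauchySeq_of_norm_sub_le_mul_norm (u := fun n => ‖a (n + 1) - 1‖)
    (fun _ => norm_nonneg _) ((summable_nat_add_iff (f := fun i => ‖a i - 1‖) 1).2 ha)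
    fun n => ?_
  have hstep : ((List.range (n + 1 + 1)).map a).prod =
      ((List.range (n + 1)).map a).prod * a (n + 1) := by
    rw [List.range_succ (n := n + 1)]
    simp
  rw [hstep, ← mul_sub_one, mul_comm ‖a (n + 1) - 1‖]
  exact norm_mul_le _ _

end ListProd

section ListInverse

variable {ι M : Type*} [Monoid M] {a b : ι → M}

lemma List.prod_reverse_map_mul_prod_map (h : ∀ i, a i * b i = 1) (l : List ι) :
    (l.reverse.map a).prod * (l.map b).prod = 1 := by
  induction l with
  | nil => simp
  | cons i l ih =>
    simp only [List.reverse_cons, List.map_append, List.prod_append, List.map_cons,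
      List.prod_cons, List.map_nil, List.prod_nil, mul_one]
    rw [mul_assoc, ← mul_assoc (a i), h i, one_mul, ih]

lemma List.prod_map_mul_prod_reverse_map (h : ∀ i, a i * b i = 1) (l : List ι) :
    (l.map a).prod * (l.reverse.map b).prod = 1 := by
  simpa using List.prod_reverse_map_mul_prod_map h l.reverse

end ListInverse

namespace NormedSpace

open Nat

variable {𝔸 : Type*} [NormedRing 𝔸] [NormedAlgebra ℚ 𝔸] [CompleteSpace 𝔸]

lemma norm_exp_sub_one_le (x : 𝔸) : ‖exp x - 1‖ ≤ Real.exp ‖x‖ - 1 := by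
  have hr := Real.summable_pow_div_factorial ‖x‖
  have hexp : exp x - 1 = ∑' n : ℕ, ((n + 1)! ⁻¹ : ℚ) • x ^ (n + 1) := by
    rw [congrFun exp_eq_tsum_rat x, (expSeries_summable' (𝕂 := ℚ) x).tsum_eq_zero_add]
    simp
  have hreal : Real.exp ‖x‖ - 1 = ∑' n : ℕ, ‖x‖ ^ (n + 1) / (n + 1)! := by
    rw [Real.exp_eq_exp_ℝ, congrFun exp_eq_tsum_div, hr.tsum_eq_zero_add]
    simp
  rw [hexp, hreal]
  refine tsum_of_norm_bounded ((summable_nat_add_iff 1).2 hr).hasSum fun n => ?_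
  have hfac : ‖((n + 1)! ⁻¹ : ℚ)‖ = ((n + 1)! : ℝ)⁻¹ := by
    rw [← Rat.norm_cast_real]
    simp
  calc ‖((n + 1)! ⁻¹ : ℚ) • x ^ (n + 1)‖ = ((n + 1)! : ℝ)⁻¹ * ‖x ^ (n + 1)‖ := by
        rw [norm_smul, hfac]
    _ ≤ ((n + 1)! : ℝ)⁻¹ * ‖x‖ ^ (n + 1) := by grw [norm_pow_le' x n.succ_pos]
    _ = ‖x‖ ^ (n + 1) / (n + 1)! := inv_mul_eq_div _ _

lemma summable_norm_exp_sub_one {ι : Type*} {ξ : ι → 𝔸} (hξ : Summable fun i => ‖ξ i‖) :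
    Summable fun i => ‖exp (ξ i) - 1‖ :=
  (Real.summable_exp_sub_one hξ).of_nonneg_of_le (fun _ => norm_nonneg _)
    fun i => norm_exp_sub_one_le (ξ i)

lemma exp_mul_exp_neg (x : 𝔸) : exp x * exp (-x) = 1 := by
  rw [← exp_add_of_commute (Commute.refl x).neg_right, add_neg_cancel, exp_zero]

lemma exp_neg_mul_exp (x : 𝔸) : exp (-x) * exp x = 1 := by
  simpa using exp_mul_exp_neg (-x)

end NormedSpace

open NormedSpace in
/-- If `(ξᵢ)` is a sequence in a complete normed algebra with `Σ ‖ξᵢ‖ < ∞`, then the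
partial products `gₙ = exp(ξₙ)⋯exp(ξ₀)` converge, the limit `g` is invertible, and its
inverse is the limit of `hₙ = exp(−ξ₀)⋯exp(−ξₙ)`. -/
theorem exp_infinite_product_converges {𝔸 : Type*} [NormedRing 𝔸] [NormedAlgebra ℝ 𝔸]
    [CompleteSpace 𝔸] (ξ : ℕ → 𝔸) (hξ : Summable fun i => ‖ξ i‖) :
    ∃ g h : 𝔸,
      Tendsto (fun n => ((List.range (n + 1)).reverse.map
          fun i => NormedSpace.exp (ξ i)).prod) atTop (𝓝 g) ∧
      Tendsto (fun n => ((List.range (n + 1)).map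
          fun i => NormedSpace.exp (-ξ i)).prod) atTop (𝓝 h) ∧
      g * h = 1 ∧ h * g = 1 := by
  let : NormedAlgebra ℚ 𝔸 := .restrictScalars ℚ ℝ 𝔸
  obtain ⟨g, hg⟩ := cauchySeq_tendsto_of_complete <|
    cauchySeq_list_prod_reverse_range (summable_norm_exp_sub_one hξ)
  obtain ⟨h, hh⟩ := cauchySeq_tendsto_of_complete <|
    cauchySeq_list_prod_range (summable_norm_exp_sub_one (ξ := fun i => -ξ i) (by simpa using hξ))
  refine ⟨g, h, hg, hh, tendsto_nhds_unique (hg.mul hh) ?_, tendsto_nhds_unique (hh.mul hg) ?_⟩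
  · exact tendsto_const_nhds.congr fun n =>
      (List.prod_reverse_map_mul_prod_map (fun i => exp_mul_exp_neg (ξ i)) _).symm
  · exact tendsto_const_nhds.congr fun n =>
      (List.prod_map_mul_prod_reverse_map (fun i => exp_neg_mul_exp (ξ i)) _).symm
end

section
/- Let F : ℝⁿ → ℝⁿ be a C² map with F(0) = 0 and with a critical point at the origin (the total derivative of F at 0 is the zero map). Then there exist r > 0 and ρ ∈ (0, 1) such that for every x with ‖x‖ ≤ r, the iterates xₘ = F^[m](x) satisfy ‖xₘ‖ ≤ ρ^(2^m) for all m ∈ ℕ. -/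
/-- If `F : ℝⁿ → ℝⁿ` is `C²` with `F 0 = 0` and critical point at the origin, then there
are `r > 0` and `ρ ∈ (0,1)` with `‖F^[m] x‖ ≤ ρ^(2^m)` for all `‖x‖ ≤ r` and all `m`. -/
theorem newton_fixed_point (n : ℕ) (F : EuclideanSpace ℝ (Fin n) → EuclideanSpace ℝ (Fin n))
    (hF : ContDiff ℝ 2 F) (hF0 : F 0 = 0) (hDF0 : fderiv ℝ F 0 = 0) :
    ∃ r : ℝ, 0 < r ∧ ∃ ρ : ℝ, ρ ∈ Set.Ioo (0 : ℝ) 1 ∧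
      ∀ x : EuclideanSpace ℝ (Fin n), ‖x‖ ≤ r →
        ∀ m : ℕ, ‖F^[m] x‖ ≤ ρ ^ (2 ^ m) := by
  -- derivative is locally Lipschitz near 0
  have hf' : ContDiff ℝ 1 (fderiv ℝ F) := hF.fderiv_right (by norm_num)
  obtain ⟨K, t, ht, hlip⟩ := hf'.contDiffAt (x := 0).exists_lipschitzOnWith
  obtain ⟨δ, hδpos, hδ⟩ := Metric.mem_nhds_iff.mp ht
  -- quadratic bound
  have quad : ∀ x : EuclideanSpace ℝ (Fin n), ‖x‖ < δ → ‖F x‖ ≤ K * ‖x‖ * ‖x‖ := by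
    intro x hx
    have hsub : Metric.closedBall (0 : EuclideanSpace ℝ (Fin n)) ‖x‖ ⊆ Metric.ball 0 δ := by
      intro y hy
      simp only [Metric.mem_closedBall, Metric.mem_ball, dist_zero_right] at *
      exact lt_of_le_of_lt hy hx
    have bound : ∀ y ∈ Metric.closedBall (0 : EuclideanSpace ℝ (Fin n)) ‖x‖,
        ‖fderiv ℝ F y‖ ≤ K * ‖x‖ := by
      intro y hy
      have h1 : dist (fderiv ℝ F y) (fderiv ℝ F 0) ≤ K * dist y 0 :=
        hlip.dist_le_mul y (hδ (hsub hy)) 0 (hδ (Metric.mem_ball_self hδpos))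
      rw [hDF0, dist_zero_right, dist_zero_right] at h1
      calc ‖fderiv ℝ F y‖ ≤ K * ‖y‖ := h1
        _ ≤ K * ‖x‖ := by
          have := Metric.mem_closedBall.mp hy
          rw [dist_zero_right] at this
          exact mul_le_mul_of_nonneg_left this K.coe_nonneg
    have := (convex_closedBall (0 : EuclideanSpace ℝ (Fin n)) ‖x‖).norm_image_sub_le_of_norm_fderiv_le
      (fun y _ => hF.differentiable (by norm_num) y) bound
      (Metric.mem_closedBall_self (norm_nonneg x))
      (Metric.mem_closedBall.mpr (by rw [dist_zero_right]))
    simpa [hF0] using this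
  -- set up constants
  set C : ℝ := max (K : ℝ) (max 1 (1 / δ)) with hC
  have hC1 : (1 : ℝ) ≤ C := le_trans (le_max_left _ _) (le_max_right _ _)
  have hCpos : (0 : ℝ) < C := lt_of_lt_of_le one_pos hC1
  have hCK : (K : ℝ) ≤ C := le_max_left _ _
  have hCδ : 1 / δ ≤ C := le_trans (le_max_right _ _) (le_max_right _ _)
  refine ⟨1 / (2 * C), by positivity, 1 / 2, ⟨by norm_num, by norm_num⟩, ?_⟩
  intro x hx m
  -- key invariant
  have key : ∀ m : ℕ, C * ‖F^[m] x‖ ≤ (1 / 2 : ℝ) ^ (2 ^ m) := by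
    intro m
    induction m with
    | zero =>
      simp only [Function.iterate_zero, id_eq, pow_zero, pow_one]
      calc C * ‖x‖ ≤ C * (1 / (2 * C)) := mul_le_mul_of_nonneg_left hx hCpos.le
        _ = 1 / 2 := by field_simp
    | succ m ih =>
      have hnorm : ‖F^[m] x‖ ≤ 1 / (2 * C) := by
        have h2 : (1 / 2 : ℝ) ^ (2 ^ m) ≤ 1 / 2 := by
          apply pow_le_of_le_one (by norm_num) (by norm_num)
          exact (by positivity : (0:ℕ) < 2^m).ne'
        have h3 : C * ‖F^[m] x‖ ≤ 1 / 2 := ih.trans h2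
        rw [le_div_iff₀ (by positivity : (0:ℝ) < 2 * C)]
        nlinarith [h3]
      have hlt : ‖F^[m] x‖ < δ := by
        have : 1 / (2 * C) < δ := by
          rw [div_lt_iff₀ (by positivity)]
          have := (div_le_iff₀ hδpos).mp hCδ
          nlinarith
        linarith
      have hq := quad _ hlt
      rw [Function.iterate_succ_apply']
      calc C * ‖F (F^[m] x)‖ ≤ C * (K * ‖F^[m] x‖ * ‖F^[m] x‖) :=
            mul_le_mul_of_nonneg_left hq hCpos.le
        _ ≤ (C * ‖F^[m] x‖) * (C * ‖F^[m] x‖) := by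
            nlinarith [norm_nonneg (F^[m] x), K.coe_nonneg]
        _ ≤ ((1 / 2 : ℝ) ^ (2 ^ m)) * ((1 / 2 : ℝ) ^ (2 ^ m)) := by
            have h0 : 0 ≤ C * ‖F^[m] x‖ := by positivity
            nlinarith
        _ = (1 / 2 : ℝ) ^ (2 ^ (m + 1)) := by
            rw [← pow_add]; congr 1; ring
  calc ‖F^[m] x‖ ≤ C * ‖F^[m] x‖ := by nlinarith [norm_nonneg (F^[m] x)]
    _ ≤ (1 / 2 : ℝ) ^ (2 ^ m) := key m
end

section
/- Let F : ℝᵏ × ℝⁿ → ℝᵏ × ℝⁿ be of the form F(a, x) = (a + f₁(a, x), f₂(a, x)) where f₁ : ℝᵏ × ℝⁿ → ℝᵏ and f₂ : ℝᵏ × ℝⁿ → ℝⁿ are C² maps such that for every a, f₁(a, 0) = 0, f₂(a, 0) = 0, and the partial derivatives of f₁ and f₂ with respect to x vanish at (a, 0). Then for every a₀ ∈ ℝᵏ and every ρ ∈ (0, 1) there exists a neighborhood B of the origin in ℝⁿ such that for all x ∈ B, writing (aₘ, xₘ) = F^[m](a₀, x), the sequence (aₘ) converges in ℝᵏ and ‖xₘ‖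 ≤ ρ^(2^m) for all m ≥ 1. -/
/-!
Near the zero section `x = 0`, a `C²` map vanishing there to first order in `x` is bounded by
`C ‖x‖²`, uniformly for `a` near `a₀`: the `x`-derivative vanishes at `x = 0` and is Lipschitz,
so it is `O(‖x‖)`, and the mean value inequality gives `O(‖x‖²)`. Hence as long as the orbit stays
near `(a₀, 0)`, `‖xₘ₊₁‖ ≤ C ‖xₘ‖²`, i.e. `C ‖xₘ‖ ≤ (C ‖x₀‖)^(2^m)`, while `‖aₘ₊₁ - aₘ‖ ≤ C ‖xₘ‖²` is
summable; for small `x₀` the total drift of `aₘ` is too small to leave the neighbourhood, so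
the estimate persists and `(aₘ)` is Cauchy.
-/

open Filter Topology Metric Asymptotics NNReal

section QuadraticBound

variable {E X G : Type*} [NormedAddCommGroup E] [NormedSpace ℝ E] [NormedAddCommGroup X]
  [NormedSpace ℝ X] [NormedAddCommGroup G] [NormedSpace ℝ G]

theorem norm_le_mul_sq_of_lipschitzOnWith_fderiv {g : X → G} {s : Set X} {K : ℝ≥0}
    (hs : Convex ℝ s) (h0 : (0 : X) ∈ s) (hg : ∀ y ∈ s, DifferentiableAt ℝ g y)
    (hg0 : g 0 = 0) (hDg0 : fderiv ℝ g 0 = 0) (hK : LipschitzOnWith K (fderiv ℝ g) s)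
    {x : X} (hx : x ∈ s) : ‖g x‖ ≤ K * ‖x‖ ^ 2 := by
  have hbound : ∀ y ∈ s ∩ closedBall 0 ‖x‖, ‖fderiv ℝ g y‖ ≤ K * ‖x‖ := fun y ⟨hys, hyx⟩ => by
    simpa [hDg0] using (hK.dist_le_mul y hys 0 h0).trans (by gcongr; exact mem_closedBall.mp hyx)
  have := (hs.inter (convex_closedBall 0 ‖x‖)).norm_image_sub_le_of_norm_fderiv_le
    (fun y hy => hg y hy.1) hbound ⟨h0, mem_closedBall_self (norm_nonneg x)⟩
    ⟨hx, mem_closedBall_zero_iff.mpr le_rfl⟩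
  simpa [hg0, sq, mul_assoc] using this

theorem isBigO_norm_snd_sq_of_contDiff {f : E × X → G} (hf : ContDiff ℝ 2 f)
    (hf0 : ∀ a, f (a, 0) = 0) (hDf : ∀ a, fderiv ℝ (fun x => f (a, x)) 0 = 0) (a₀ : E) :
    f =O[𝓝 (a₀, 0)] fun p => ‖p.2‖ ^ 2 := by
  obtain ⟨K, t, ht, hK⟩ := (hf.fderiv_right (m := 1) le_rfl).contDiffAt.exists_lipschitzOnWith
  obtain ⟨r, hr, hrt⟩ := Metric.mem_nhds_iff.mp ht
  refine .of_bound K ?_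
  filter_upwards [ball_mem_nhds _ hr] with ⟨a, x⟩ hp
  rw [← ball_prod_same, Set.mem_prod] at hp
  have hfd : Differentiable ℝ f := hf.differentiable two_ne_zero
  have hpartial : ∀ y, fderiv ℝ (fun y => f (a, y)) y = (fderiv ℝ f (a, y)).comp (.inr ℝ E X) :=
    fun y => ((hfd _).hasFDerivAt.comp y (hasFDerivAt_prodMk_right a y)).fderiv
  have hlip : LipschitzOnWith K (fderiv ℝ fun y => f (a, y)) (ball 0 r) := by
    refine .of_dist_le_mul fun y hy y' hy' => ?_
    have hmem : ∀ z ∈ ball (0 : X) r, (a, z) ∈ t := fun z hz =>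
      hrt (by rw [← ball_prod_same]; exact ⟨hp.1, hz⟩)
    rw [hpartial, hpartial, dist_eq_norm, ← ContinuousLinearMap.sub_comp]
    calc ‖(fderiv ℝ f (a, y) - fderiv ℝ f (a, y')).comp (.inr ℝ E X)‖
        ≤ ‖fderiv ℝ f (a, y) - fderiv ℝ f (a, y')‖ * ‖ContinuousLinearMap.inr ℝ E X‖ :=
          ContinuousLinearMap.opNorm_comp_le _ _
      _ ≤ K * dist (a, y) (a, y') * 1 := by
          rw [← dist_eq_norm]
          gcongr
          · exact hK.dist_le_mul _ (hmem y hy) _ (hmem y' hy')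
          · exact ContinuousLinearMap.norm_inr_le_one ℝ E X
      _ = K * dist y y' := by simp [Prod.dist_eq]
  simpa using norm_le_mul_sq_of_lipschitzOnWith_fderiv (convex_ball 0 r) (mem_ball_self hr)
    (fun y _ => (hfd _).comp y (hasFDerivAt_prodMk_right a y).differentiableAt) (hf0 a) (hDf a)
    hlip hp.2

end QuadraticBound

section Iteration

variable {E X : Type*} [NormedAddCommGroup E] [NormedAddCommGroup X]
  {f₁ : E × X → E} {f₂ : E × X → X} {a₀ : E} {C r δ : ℝ}

theorem norm_increment_le_of_dist_fst_le_of_norm_snd_le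
    (hf : ∀ p ∈ closedBall (a₀, 0) r, ‖f₁ p‖ ≤ C * ‖p.2‖ ^ 2 ∧ ‖f₂ p‖ ≤ C * ‖p.2‖ ^ 2)
    (hC : 1 ≤ C) (hδ₀ : 0 < δ) (hδ : δ ≤ 1 / 2) (hδr : 2 * δ ≤ r) {p : E × X} {m : ℕ}
    (hp₁ : dist p.1 a₀ ≤ r - r / 2 ^ m) (hp₂ : ‖p.2‖ ≤ δ ^ 2 ^ m / C) :
    ‖f₁ p‖ ≤ r / 2 / 2 ^ m ∧ ‖f₂ p‖ ≤ δ ^ 2 ^ (m + 1) / C := by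
  have hδm : δ ^ 2 ^ m / C ≤ δ := calc
    δ ^ 2 ^ m / C ≤ δ ^ 2 ^ m := div_le_self (by positivity) hC
    _ ≤ δ ^ 1 := pow_le_pow_of_le_one hδ₀.le (by linarith) Nat.one_le_two_pow
    _ = δ := pow_one δ
  have hp : p ∈ closedBall (a₀, 0) r := by
    rw [mem_closedBall, Prod.dist_eq, dist_zero_right]
    exact max_le (hp₁.trans (sub_le_self _ (div_nonneg (by linarith) (by positivity))))
      (by linarith)
  have hsq : C * ‖p.2‖ ^ 2 ≤ δ ^ 2 ^ (m + 1) / C := calc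
    C * ‖p.2‖ ^ 2 ≤ C * (δ ^ 2 ^ m / C) ^ 2 := by gcongr
    _ = δ ^ 2 ^ (m + 1) / C := by field_simp; ring
  have hsmall : δ ^ 2 ^ (m + 1) / C ≤ r / 2 / 2 ^ m := calc
    δ ^ 2 ^ (m + 1) / C ≤ δ ^ 2 ^ (m + 1) := div_le_self (by positivity) hC
    _ ≤ δ ^ (m + 1) := pow_le_pow_of_le_one hδ₀.le (by linarith) Nat.lt_two_pow_self.le
    _ = δ * δ ^ m := pow_succ' δ m
    _ ≤ r / 2 * (1 / 2) ^ m := by gcongr <;> linarith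
    _ = r / 2 / 2 ^ m := by rw [one_div_pow]; ring
  exact ⟨(hf p hp).1.trans (hsq.trans hsmall), (hf p hp).2.trans hsq⟩

theorem iterate_dist_fst_le_and_norm_snd_le {F : E × X → E × X} (hF : ∀ p, F p = (p.1 + f₁ p, f₂ p))
    (hf : ∀ p ∈ closedBall (a₀, 0) r, ‖f₁ p‖ ≤ C * ‖p.2‖ ^ 2 ∧ ‖f₂ p‖ ≤ C * ‖p.2‖ ^ 2)
    (hC : 1 ≤ C) (hδ₀ : 0 < δ) (hδ : δ ≤ 1 / 2) (hδr : 2 * δ ≤ r) {x : X} (hx : ‖x‖ ≤ δ / C)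
    (m : ℕ) :
    dist (F^[m] (a₀, x)).1 a₀ ≤ r - r / 2 ^ m ∧ ‖(F^[m] (a₀, x)).2‖ ≤ δ ^ 2 ^ m / C := by
  induction m with
  | zero => simpa using hx
  | succ m ih =>
    obtain ⟨h₁, h₂⟩ := norm_increment_le_of_dist_fst_le_of_norm_snd_le hf hC hδ₀ hδ hδr ih.1 ih.2
    rw [Function.iterate_succ_apply', hF]
    refine ⟨?_, h₂⟩
    calc dist ((F^[m] (a₀, x)).1 + f₁ (F^[m] (a₀, x))) a₀
        ≤ dist ((F^[m] (a₀, x)).1 + f₁ (F^[m] (a₀, x))) (F^[m] (a₀, x)).1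
          + dist (F^[m] (a₀, x)).1 a₀ := dist_triangle _ _ _
      _ ≤ r / 2 / 2 ^ m + (r - r / 2 ^ m) := by rw [dist_self_add_left]; exact add_le_add h₁ ih.1
      _ = r - r / 2 ^ (m + 1) := by ring

theorem cauchySeq_iterate_fst {F : E × X → E × X} (hF : ∀ p, F p = (p.1 + f₁ p, f₂ p))
    (hf : ∀ p ∈ closedBall (a₀, 0) r, ‖f₁ p‖ ≤ C * ‖p.2‖ ^ 2 ∧ ‖f₂ p‖ ≤ C * ‖p.2‖ ^ 2)
    (hC : 1 ≤ C) (hδ₀ : 0 < δ) (hδ : δ ≤ 1 / 2) (hδr : 2 * δ ≤ r) {x : X} (hx : ‖x‖ ≤ δ / C) :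
    CauchySeq fun m => (F^[m] (a₀, x)).1 := by
  refine cauchySeq_of_le_geometric_two (C := r) fun m => ?_
  obtain ⟨h₁, h₂⟩ := iterate_dist_fst_le_and_norm_snd_le hF hf hC hδ₀ hδ hδr hx m
  rw [Function.iterate_succ_apply', hF, dist_comm, dist_self_add_left]
  exact (norm_increment_le_of_dist_fst_le_of_norm_snd_le hf hC hδ₀ hδ hδr h₁ h₂).1

end Iteration

/-- Parametric quadratic-convergence fixed point theorem: for
`F(a,x) = (a + f₁(a,x), f₂(a,x))` with `f₁, f₂` C², vanishing at `x = 0` together with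
their partial `x`-derivatives, for every `a₀` and `ρ ∈ (0,1)` there is a neighborhood of
`0` on which the iterates `(aₘ, xₘ) = F^[m](a₀, x)` satisfy: `(aₘ)` converges and
`‖xₘ‖ ≤ ρ^(2^m)` for `m ≥ 1`. -/
theorem parametric_newton_fixed_point (k n : ℕ)
    (f₁ : EuclideanSpace ℝ (Fin k) × EuclideanSpace ℝ (Fin n) → EuclideanSpace ℝ (Fin k))
    (f₂ : EuclideanSpace ℝ (Fin k) × EuclideanSpace ℝ (Fin n) → EuclideanSpace ℝ (Fin n))
    (hf₁ : ContDiff ℝ 2 f₁) (hf₂ : ContDiff ℝ 2 f₂)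
    (hf₁0 : ∀ a, f₁ (a, 0) = 0) (hf₂0 : ∀ a, f₂ (a, 0) = 0)
    (hDf₁ : ∀ a, fderiv ℝ (fun x => f₁ (a, x)) 0 = 0)
    (hDf₂ : ∀ a, fderiv ℝ (fun x => f₂ (a, x)) 0 = 0)
    (F : EuclideanSpace ℝ (Fin k) × EuclideanSpace ℝ (Fin n) →
        EuclideanSpace ℝ (Fin k) × EuclideanSpace ℝ (Fin n))
    (hF : ∀ p, F p = (p.1 + f₁ p, f₂ p)) :
    ∀ a₀ : EuclideanSpace ℝ (Fin k), ∀ ρ ∈ Set.Ioo (0 : ℝ) 1,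
      ∃ ε : ℝ, 0 < ε ∧ ∀ x : EuclideanSpace ℝ (Fin n), ‖x‖ < ε →
        (∃ L, Tendsto (fun m => (F^[m] (a₀, x)).1) atTop (𝓝 L)) ∧
        ∀ m : ℕ, 1 ≤ m → ‖(F^[m] (a₀, x)).2‖ ≤ ρ ^ (2 ^ m) := by
  intro a₀ ρ ⟨hρ₀, hρ₁⟩
  obtain ⟨C₁, h₁⟩ := (isBigO_norm_snd_sq_of_contDiff hf₁ hf₁0 hDf₁ a₀).bound
  obtain ⟨C₂, h₂⟩ := (isBigO_norm_snd_sq_of_contDiff hf₂ hf₂0 hDf₂ a₀).bound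
  obtain ⟨r, hr, hbound⟩ := nhds_basis_closedBall.eventually_iff.mp (h₁.and h₂)
  set C := max (max C₁ C₂) 1
  set δ := min (min ρ (1 / 2)) (r / 2)
  have hC : 1 ≤ C := le_max_right _ _
  have hδ₀ : 0 < δ := by positivity
  have hf : ∀ p ∈ closedBall (a₀, 0) r, ‖f₁ p‖ ≤ C * ‖p.2‖ ^ 2 ∧ ‖f₂ p‖ ≤ C * ‖p.2‖ ^ 2 := by
    intro p hp
    obtain ⟨hp₁, hp₂⟩ := hbound hp
    simp only [norm_pow, norm_norm] at hp₁ hp₂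
    exact ⟨hp₁.trans (by gcongr; exact le_max_of_le_left (le_max_left _ _)),
      hp₂.trans (by gcongr; exact le_max_of_le_left (le_max_right _ _))⟩
  have hδ : δ ≤ 1 / 2 := min_le_of_left_le (min_le_right _ _)
  have hδr : 2 * δ ≤ r := by linarith [min_le_right (min ρ (1 / 2)) (r / 2)]
  refine ⟨δ / C, by positivity, fun x hx => ⟨?_, fun m _ => ?_⟩⟩
  · exact cauchySeq_tendsto_of_complete (cauchySeq_iterate_fst hF hf hC hδ₀ hδ hδr hx.le)
  · calc ‖(F^[m] (a₀, x)).2‖ ≤ δ ^ 2 ^ m / C :=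
          (iterate_dist_fst_le_and_norm_snd_le hF hf hC hδ₀ hδ hδr hx.le m).2
      _ ≤ δ ^ 2 ^ m := div_le_self (by positivity) hC
      _ ≤ ρ ^ 2 ^ m := by gcongr; exact min_le_of_left_le (min_le_left _ _)
end

section
/- Let m, k ≥ 1, let v : ℝᵐ → ℝᵐ be continuous, let f : ℝᵐ → ℝᵏ be C¹ and let g : ℝᵐ → (k × k real matrices) be continuous, and suppose that for every x ∈ ℝᵐ the derivative of f at x applied to v(x) equals g(x) · f(x) (matrix–vector product). Let γ : ℝ → ℝᵐ be differentiable with γ'(t) = v(γ(t)) for all t. If f(γ(0)) = 0 then f(γ(t)) = 0 for all t ∈ ℝ. -/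
/-!
Along an integral curve `γ` of `v`, the chain rule turns the hypothesis into the linear ODE
`y' = g(γ t) · y` for `y = f ∘ γ`. Its coefficient is continuous, hence bounded on compact time
intervals, so the right-hand side is Lipschitz there and Grönwall uniqueness forces the solution
with `y 0 = 0` to agree with the zero solution.
-/

open Set

section LinearODE

variable {E : Type*} [NormedAddCommGroup E] [NormedSpace ℝ E]

theorem eqOn_zero_of_hasDerivAt_clm_apply_of_mem_Icc {A : ℝ → E →L[ℝ] E} {y : ℝ → E}
    {a b t₀ : ℝ} (hA : ContinuousOn A (Icc a b)) (ht₀ : t₀ ∈ Ioo a b)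
    (hy : ∀ t ∈ Icc a b, HasDerivAt y (A t (y t)) t) (h₀ : y t₀ = 0) :
    EqOn y 0 (Icc a b) := by
  obtain ⟨C, hC⟩ := isCompact_Icc.exists_bound_of_continuousOn hA
  have hlip : ∀ t ∈ Ioo a b, LipschitzOnWith C.toNNReal (A t) univ := fun t ht => by
    refine ((A t).lipschitz.weaken ?_).lipschitzOnWith
    rw [← norm_toNNReal]
    exact Real.toNNReal_mono (hC t (Ioo_subset_Icc_self ht))
  exact ODE_solution_unique_of_mem_Icc (v := fun t => A t) (s := fun _ => univ) hlip ht₀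
    (HasDerivAt.continuousOn hy) (fun t ht => hy t (Ioo_subset_Icc_self ht)) (fun _ _ => trivial)
    continuousOn_const (fun t _ => by simp) (fun _ _ => trivial) h₀

theorem eq_zero_of_hasDerivAt_clm_apply {A : ℝ → E →L[ℝ] E} {y : ℝ → E} {t₀ : ℝ}
    (hA : Continuous A) (hy : ∀ t, HasDerivAt y (A t (y t)) t) (h₀ : y t₀ = 0) (t : ℝ) :
    y t = 0 := by
  have hmem : t ∈ Icc (t₀ - |t - t₀| - 1) (t₀ + |t - t₀| + 1) := by
    constructor <;> linarith [neg_abs_le (t - t₀), le_abs_self (t - t₀)]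
  have ht₀ : t₀ ∈ Ioo (t₀ - |t - t₀| - 1) (t₀ + |t - t₀| + 1) := by
    constructor <;> linarith [abs_nonneg (t - t₀)]
  exact eqOn_zero_of_hasDerivAt_clm_apply_of_mem_Icc hA.continuousOn ht₀ (fun s _ => hy s) h₀
    hmem

end LinearODE

theorem zero_set_invariant_general (m k : ℕ)
    (v : (Fin m → ℝ) → (Fin m → ℝ))
    (f : (Fin m → ℝ) → (Fin k → ℝ)) (hf : ContDiff ℝ 1 f)
    (g : (Fin m → ℝ) → Matrix (Fin k) (Fin k) ℝ) (hg : Continuous g)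
    (hrel : ∀ x, fderiv ℝ f x (v x) = Matrix.mulVec (g x) (f x))
    (γ : ℝ → (Fin m → ℝ)) (hγ : ∀ t, HasDerivAt γ (v (γ t)) t)
    (h0 : f (γ 0) = 0) :
    ∀ t : ℝ, f (γ t) = 0 := by
  let mulVecL : Matrix (Fin k) (Fin k) ℝ →L[ℝ] (Fin k → ℝ) →L[ℝ] Fin k → ℝ :=
    (Matrix.mulVecBilin ℝ ℝ).toContinuousBilinearMap
  have hγc : Continuous γ := Differentiable.continuous fun t => (hγ t).differentiableAt
  have hy : ∀ t, HasDerivAt (f ∘ γ) (mulVecL (g (γ t)) (f (γ t))) t := fun t => by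
    have := ((hf.differentiable one_ne_zero) (γ t)).hasFDerivAt.comp_hasDerivAt t (hγ t)
    rwa [hrel] at this
  exact eq_zero_of_hasDerivAt_clm_apply (mulVecL.continuous.comp (hg.comp hγc)) hy h0

/-- If `Df(x)(v(x)) = g(x)·f(x)` for all `x` (the components of `f` are differentiated
along `v` into the ideal they generate), and `γ` is an integral curve of `v` with
`f(γ(0)) = 0`, then `f(γ(t)) = 0` for all `t`. -/
theorem zero_set_invariant (m k : ℕ) (hm : 1 ≤ m) (hk : 1 ≤ k)
    (v : (Fin m → ℝ) → (Fin m → ℝ)) (hv : Continuous v)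
    (f : (Fin m → ℝ) → (Fin k → ℝ)) (hf : ContDiff ℝ 1 f)
    (g : (Fin m → ℝ) → Matrix (Fin k) (Fin k) ℝ) (hg : Continuous g)
    (hrel : ∀ x, fderiv ℝ f x (v x) = Matrix.mulVec (g x) (f x))
    (γ : ℝ → (Fin m → ℝ)) (hγ : ∀ t, HasDerivAt γ (v (γ t)) t)
    (h0 : f (γ 0) = 0) :
    ∀ t : ℝ, f (γ t) = 0 :=
  zero_set_invariant_general m k v f hf g hg hrel γ hγ h0
end
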